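/- Define, for a sequence (V_j)_{j≥-1} in M_N(ℂ) and θ ∈ M_N(ℂ[x]), P_k(θ) = θ^{(k)}(0)/(k-1)! - (1/2)Σ_{j=0}^{k}[θ^{(j)}(0)/j!, V_{k-1-j}]. Then for all θ_1, θ_2 ∈ M_N(ℂ[x]) and all k ≥ 0: P_k(θ_1θ_2) = Σ_{s=0}^{k} ( P_{k-s}(θ_1)·θ_2^{(s)}(0)/s! + θ_1^{(s)}(0)/s!·P_{k-s}(θ_2) ). -/

import Mathlib

open Polynomial

/-- θ^{(j)}(0) for a matrix of polynomials: the j-th derivative evaluated at 0. -/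
noncomputable def matDerivAtZero {N : ℕ} (θ : Matrix (Fin N) (Fin N) (Polynomial ℂ))
    (j : ℕ) : Matrix (Fin N) (Fin N) ℂ :=
  Matrix.of fun i l => ((derivative^[j] (θ i l)).eval 0)

/-- P_k(θ) = k/k! · θ^{(k)}(0) - (1/2) Σ_{j=0}^{k} [θ^{(j)}(0)/j!, V_{k-1-j}]. -/
noncomputable def Pfam {N : ℕ} (V : ℤ → Matrix (Fin N) (Fin N) ℂ)
    (θ : Matrix (Fin N) (Fin N) (Polynomial ℂ)) (k : ℕ) :
    Matrix (Fin N) (Fin N) ℂ :=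
  ((k : ℂ) / (k.factorial : ℂ)) • matDerivAtZero θ k -
    (1 / 2 : ℂ) • ∑ j ∈ Finset.range (k + 1),
      (((j.factorial : ℂ))⁻¹ • matDerivAtZero θ j * V ((k : ℤ) - 1 - j) -
        V ((k : ℤ) - 1 - j) * ((j.factorial : ℂ))⁻¹ • matDerivAtZero θ j)

/-!
Pass to Taylor series: with `a = ∑ θ^{(j)}(0)/j! X^j` and `W = ∑ V_{m-1} X^m`, the matrix `P_k(θ)`
is the `k`-th coefficient of `X a' - ½ [a, W]`. The Euler operator `X d/dX` and the inner
derivation `[·, W]` both satisfy the Leibniz rule on power series with (noncommuting) matrix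
coefficients, hence so does their combination, and the Taylor series of `θ₁ θ₂` is the product of
those of `θ₁` and `θ₂`. The formula is the `k`-th coefficient of that Leibniz rule.
-/

open Finset

namespace PowerSeries

section Semiring

variable {A : Type*} [Semiring A]

lemma coeff_mul_eq_sum_range (f g : A⟦X⟧) (k : ℕ) :
    coeff k (f * g) = ∑ j ∈ range (k + 1), coeff j f * coeff (k - j) g := by
  rw [coeff_mul, Nat.sum_antidiagonal_eq_sum_range_succ_mk]

lemma coeff_mul_eq_sum_range_rev (f g : A⟦X⟧) (k : ℕ) :
    coeff k (f * g) = ∑ j ∈ range (k + 1), coeff (k - j) f * coeff j g := by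
  rw [coeff_mul, ← Nat.sum_antidiagonal_swap, Nat.sum_antidiagonal_eq_sum_range_succ_mk]
  rfl

noncomputable def eulerOp (f : A⟦X⟧) : A⟦X⟧ :=
  mk fun n => n • coeff n f

@[simp]
lemma coeff_eulerOp (f : A⟦X⟧) (n : ℕ) : coeff n (eulerOp f) = n • coeff n f :=
  coeff_mk _ _

lemma eulerOp_mul (f g : A⟦X⟧) : eulerOp (f * g) = eulerOp f * g + f * eulerOp g := by
  ext n
  simp only [coeff_eulerOp, map_add, coeff_mul, smul_sum, ← sum_add_distrib]
  refine sum_congr rfl fun p hp => ?_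
  rw [← mem_antidiagonal.mp hp, add_smul, smul_mul_assoc, mul_smul_comm]

end Semiring

section Ring

variable {R A : Type*} [CommSemiring R] [Ring A] [Algebra R A]

lemma coeff_commutator_mk_shift (f : A⟦X⟧) (V : ℤ → A) (k : ℕ) :
    coeff k (f * mk (fun m : ℕ => V (m - 1)) - mk (fun m : ℕ => V (m - 1)) * f) =
      ∑ j ∈ range (k + 1), (coeff j f * V (k - 1 - j) - V (k - 1 - j) * coeff j f) := by
  rw [map_sub, coeff_mul_eq_sum_range, coeff_mul_eq_sum_range_rev, ← sum_sub_distrib]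
  refine sum_congr rfl fun j hj => ?_
  rw [coeff_mk, Nat.cast_sub (by grind)]
  ring_nf

noncomputable def eulerAdOp (c : R) (W f : A⟦X⟧) : A⟦X⟧ :=
  eulerOp f - c • (f * W - W * f)

lemma eulerAdOp_mul (c : R) (W f g : A⟦X⟧) :
    eulerAdOp c W (f * g) = eulerAdOp c W f * g + f * eulerAdOp c W g := by
  have commutator_mul :
      f * g * W - W * (f * g) = (f * W - W * f) * g + f * (g * W - W * g) := by
    noncomm_ring
  simp only [eulerAdOp, eulerOp_mul, commutator_mul, smul_add, sub_mul, mul_sub, smul_mul_assoc,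
    mul_smul_comm]
  abel

end Ring

end PowerSeries

noncomputable def matTaylorSeries {n R : Type*} [Fintype n] [DecidableEq n] [CommSemiring R]
    (θ : Matrix n n R[X]) : PowerSeries (Matrix n n R) :=
  (matPolyEquiv θ : (Matrix n n R)[X])

lemma matTaylorSeries_mul {n R : Type*} [Fintype n] [DecidableEq n] [CommSemiring R]
    (θ₁ θ₂ : Matrix n n R[X]) :
    matTaylorSeries (θ₁ * θ₂) = matTaylorSeries θ₁ * matTaylorSeries θ₂ := by
  rw [matTaylorSeries, map_mul, Polynomial.coe_mul]
  rfl

lemma coeff_matTaylorSeries {N : ℕ} (θ : Matrix (Fin N) (Fin N) ℂ[X]) (j : ℕ) :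
    PowerSeries.coeff j (matTaylorSeries θ) = ((j.factorial : ℂ))⁻¹ • matDerivAtZero θ j := by
  ext p q
  have hj : (j.factorial : ℂ) ≠ 0 := by exact_mod_cast j.factorial_ne_zero
  simp [matTaylorSeries, matDerivAtZero, ← coeff_zero_eq_eval_zero, coeff_iterate_derivative,
    Nat.descFactorial_self, hj]

lemma Pfam_eq_coeff_eulerAdOp {N : ℕ} (V : ℤ → Matrix (Fin N) (Fin N) ℂ)
    (θ : Matrix (Fin N) (Fin N) ℂ[X]) (k : ℕ) :
    Pfam V θ k = PowerSeries.coeff k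
      (PowerSeries.eulerAdOp (1 / 2 : ℂ) (PowerSeries.mk fun m : ℕ => V (m - 1))
        (matTaylorSeries θ)) := by
  rw [PowerSeries.eulerAdOp, map_sub, PowerSeries.coeff_smul,
    PowerSeries.coeff_commutator_mk_shift, PowerSeries.coeff_eulerOp, Pfam]
  simp only [coeff_matTaylorSeries, div_eq_mul_inv, mul_smul, Nat.cast_smul_eq_nsmul]

theorem Pfam_product_formula {N : ℕ} (V : ℤ → Matrix (Fin N) (Fin N) ℂ)
    (θ₁ θ₂ : Matrix (Fin N) (Fin N) (Polynomial ℂ)) (k : ℕ) :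
    Pfam V (θ₁ * θ₂) k =
      ∑ s ∈ Finset.range (k + 1),
        (Pfam V θ₁ (k - s) * ((s.factorial : ℂ))⁻¹ • matDerivAtZero θ₂ s +
          ((s.factorial : ℂ))⁻¹ • matDerivAtZero θ₁ s * Pfam V θ₂ (k - s)) := by
  simp only [Pfam_eq_coeff_eulerAdOp, ← coeff_matTaylorSeries, matTaylorSeries_mul,
    PowerSeries.eulerAdOp_mul, map_add, sum_add_distrib]
  rw [PowerSeries.coeff_mul_eq_sum_range_rev, PowerSeries.coeff_mul_eq_sum_range]
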